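/- arXiv:1009.1565 — 6 statements merged into one kernel-verified Lean document; each statement's English description precedes it below -/
import Mathlib

section
/- Let A be a family of connected subsets of a compact metric space X, and let ∼_A be the finest closed equivalence relation respecting A. Then every ∼_A-class is connected (hence a subcontinuum of X), and the quotient map X → X/∼_A is monotone. -/
open Set Filter Metric Topology Function

/-- A relation on a topological space is closed if its graph is closed. -/
def ClosedRel {Y : Type*} [TopologicalSpace Y] (r : Y → Y → Prop) : Prop :=
  IsClosed {p : Y × Y | r p.1 p.2}

/-- A relation respects a family `A` of subsets if it is closed and each member of `A`
is contained in a single class. -/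
def Respects {Y : Type*} [TopologicalSpace Y] (A : Set (Set Y)) (r : Y → Y → Prop) : Prop :=
  ClosedRel r ∧ ∀ a ∈ A, ∀ x ∈ a, ∀ y ∈ a, r x y

/-- The finest closed equivalence relation respecting `A`: the intersection of all
closed equivalence relations respecting `A`. -/
def finestRel {Y : Type*} [TopologicalSpace Y] (A : Set (Set Y)) : Y → Y → Prop :=
  fun x y => ∀ r : Y → Y → Prop, Equivalence r → Respects A r → r x y

/-- A limit continuum: a subcontinuum which is the Hausdorff limit of a sequence of
pairwise disjoint subcontinua. -/
def IsLimCont {Y : Type*} [MetricSpace Y] (C : Set Y) : Prop :=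
  IsCompact C ∧ IsConnected C ∧
  ∃ F : ℕ → Set Y, (∀ n, IsCompact (F n) ∧ IsConnected (F n)) ∧
    Pairwise (Disjoint on F) ∧
    Tendsto (fun n => EMetric.hausdorffEdist (F n) C) atTop (nhds 0)

/-- Finitely Suslinian: every family of pairwise disjoint subcontinua of diameter at least
`ε > 0` is finite. -/
def FinSus (Y : Type*) [MetricSpace Y] : Prop :=
  ∀ ε : ℝ, 0 < ε → ∀ S : Set (Set Y),
    (∀ C ∈ S, IsCompact C ∧ IsConnected C ∧ ε ≤ Metric.diam C) →
    S.Pairwise Disjoint → S.Finite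

/-- A subcontinuum of the subset `Z`. -/
def SubcontIn {E : Type*} [MetricSpace E] (Z C : Set E) : Prop :=
  C ⊆ Z ∧ IsCompact C ∧ IsConnected C

/-- A limit continuum of the subset `Z`. -/
def LimContIn {E : Type*} [MetricSpace E] (Z C : Set E) : Prop :=
  SubcontIn Z C ∧ ∃ F : ℕ → Set E, (∀ n, SubcontIn Z (F n)) ∧
    Pairwise (Disjoint on F) ∧
    Tendsto (fun n => EMetric.hausdorffEdist (F n) C) atTop (nhds 0)

/-- The subset `Z` is finitely Suslinian. -/
def FinSusIn {E : Type*} [MetricSpace E] (Z : Set E) : Prop :=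
  ∀ ε : ℝ, 0 < ε → ∀ S : Set (Set E),
    (∀ C ∈ S, SubcontIn Z C ∧ ε ≤ Metric.diam C) → S.Pairwise Disjoint → S.Finite

/-- A planar compactum is unshielded if it is the boundary of the unbounded component of
its complement. -/
def Unshielded (X : Set ℂ) : Prop :=
  ∀ z, z ∉ X → ¬Bornology.IsBounded (connectedComponentIn Xᶜ z) →
    X = frontier (connectedComponentIn Xᶜ z)

/-!
Refine a closed equivalence relation `r` on a compact Hausdorff space by declaring `x` and `y`
related when they lie in the same connected component of their `r`-class. The refinement is
again closed: classes of a closed relation vary upper semicontinuously, and in a compact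
Hausdorff space a point outside the component of `x` in a compact set is cut off from `x` by
two disjoint open sets covering it. If the members of `A` are connected and respected by `r`,
they are respected by the refinement too. For the finest relation the refinement therefore
cannot be strictly finer: every class is its own component.
-/

section FinestRel

variable {X : Type*} [TopologicalSpace X] (A : Set (Set X))

theorem finestRel_equivalence : Equivalence (finestRel A) :=
  ⟨fun x _ hr _ => hr.refl x,
   fun h r hr hrA => hr.symm (h r hr hrA),
   fun h₁ h₂ r hr hrA => hr.trans (h₁ r hr hrA) (h₂ r hr hrA)⟩

theorem finestRel_closedRel : ClosedRel (finestRel A) := by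
  simp only [ClosedRel, finestRel, ofPred_forall]
  exact isClosed_iInter fun _ => isClosed_iInter fun _ => isClosed_iInter fun hrA => hrA.1

theorem finestRel_respects : Respects A (finestRel A) :=
  ⟨finestRel_closedRel A, fun a ha x hx y hy _ _ hrA => hrA.2 a ha x hx y hy⟩

end FinestRel

theorem Equivalence.setOf_eq_of_rel {X : Type*} {r : X → X → Prop} (hr : Equivalence r)
    {x y : X} (h : r x y) : {z | r x z} = {z | r y z} :=
  ext fun _ => ⟨hr.trans (hr.symm h), hr.trans h⟩

section ComponentRel

variable {X : Type*} [TopologicalSpace X] {r : X → X → Prop}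

def componentRel (r : X → X → Prop) (x y : X) : Prop :=
  y ∈ connectedComponentIn {z | r x z} x

theorem componentRel.rel {x y : X} (h : componentRel r x y) : r x y :=
  connectedComponentIn_subset _ _ h

theorem Equivalence.componentRel (hr : Equivalence r) : Equivalence (componentRel r) where
  refl x := mem_connectedComponentIn (hr.refl x)
  symm {x _} h := by
    rw [_root_.componentRel, ← hr.setOf_eq_of_rel h.rel, ← connectedComponentIn_eq h]
    exact mem_connectedComponentIn (hr.refl x)
  trans {_ _ _} hxy hyz := by
    rwa [_root_.componentRel, connectedComponentIn_eq hxy, hr.setOf_eq_of_rel hxy.rel]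

theorem ClosedRel.isClosed_setOf (hr : ClosedRel r) (x : X) : IsClosed {z | r x z} :=
  hr.preimage (Continuous.prodMk_right x)

theorem ClosedRel.isOpen_setOf_forall_rel_mem [CompactSpace X] (hr : ClosedRel r) {W : Set X}
    (hW : IsOpen W) : IsOpen {x | ∀ z, r x z → z ∈ W} := by
  have hcompl : {x | ∀ z, r x z → z ∈ W}ᶜ = Prod.fst '' ({p | r p.1 p.2} ∩ univ ×ˢ Wᶜ) := by
    ext x
    simp
  rw [← isClosed_compl_iff, hcompl]
  exact isClosedMap_fst_of_compactSpace _ (hr.inter (isClosed_univ.prod hW.isClosed_compl))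

theorem IsCompact.exists_isOpen_separation_of_notMem_connectedComponentIn [T2Space X]
    {C : Set X} (hC : IsCompact C) {x y : X} (hx : x ∈ C) (hy : y ∈ C)
    (hxy : y ∉ connectedComponentIn C x) :
    ∃ U V, IsOpen U ∧ IsOpen V ∧ Disjoint U V ∧ C ⊆ U ∪ V ∧ x ∈ U ∧ y ∈ V := by
  have : CompactSpace C := isCompact_iff_compactSpace.mp hC
  have hxy' : (⟨y, hy⟩ : C) ∉ connectedComponent (⟨x, hx⟩ : C) := fun h =>
    hxy (connectedComponentIn_eq_image hx ▸ ⟨_, h, rfl⟩)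
  simp only [connectedComponent_eq_iInter_isClopen, mem_iInter, not_forall] at hxy'
  obtain ⟨⟨Z, hZ, hxZ⟩, hyZ⟩ := hxy'
  obtain ⟨U, V, hU, hV, hZU, hZV, hUV⟩ := SeparatedNhds.of_isCompact_isCompact
    (hZ.isClosed.isCompact.image continuous_subtype_val)
    (hZ.compl.isClosed.isCompact.image continuous_subtype_val)
    ((disjoint_image_iff Subtype.val_injective).mpr disjoint_compl_right)
  refine ⟨U, V, hU, hV, hUV, fun z hz => ?_, hZU ⟨_, hxZ, rfl⟩, hZV ⟨⟨y, hy⟩, hyZ, rfl⟩⟩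
  by_cases hzZ : (⟨z, hz⟩ : C) ∈ Z
  · exact Or.inl (hZU ⟨_, hzZ, rfl⟩)
  · exact Or.inr (hZV ⟨_, hzZ, rfl⟩)

theorem ClosedRel.componentRel [CompactSpace X] [T2Space X] (hr : Equivalence r)
    (hrc : ClosedRel r) : ClosedRel (componentRel r) := by
  rw [ClosedRel, ← isOpen_compl_iff, isOpen_iff_mem_nhds]
  rintro ⟨x, y⟩ hxy
  by_cases hrxy : r x y
  swap
  · exact mem_of_superset (hrc.isOpen_compl.mem_nhds hrxy) fun _ hp hcomp => hp hcomp.rel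
  obtain ⟨U, V, hU, hV, hUV, hcover, hxU, hyV⟩ :=
    (hrc.isClosed_setOf x).isCompact.exists_isOpen_separation_of_notMem_connectedComponentIn
      (hr.refl x) hrxy hxy
  -- Nearby points have their whole class inside `U ∪ V`, so their component cannot reach `V`.
  have hO := hrc.isOpen_setOf_forall_rel_mem (hU.union hV)
  refine mem_of_superset (((hU.inter hO).prod hV).mem_nhds ⟨⟨hxU, hcover⟩, hyV⟩) ?_
  rintro ⟨x', y'⟩ ⟨⟨hx'U, hx'O⟩, hy'V⟩ hcomp
  have hsub : connectedComponentIn {z | r x' z} x' ⊆ U :=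
    isPreconnected_connectedComponentIn.subset_left_of_subset_union hU hV hUV
      (fun z hz => hx'O z (connectedComponentIn_subset _ _ hz))
      ⟨x', mem_connectedComponentIn (hr.refl x'), hx'U⟩
  exact hUV.notMem_of_mem_left (hsub hcomp) hy'V

theorem Respects.componentRel [CompactSpace X] [T2Space X] {A : Set (Set X)}
    (hA : ∀ a ∈ A, IsPreconnected a) (hr : Equivalence r) (hrA : Respects A r) :
    Respects A (componentRel r) :=
  ⟨hrA.1.componentRel hr, fun a ha x hx _ hy =>
    (hA a ha).subset_connectedComponentIn hx (fun _ hz => hrA.2 a ha x hx _ hz) hy⟩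

end ComponentRel

theorem isConnected_setOf_finestRel {X : Type*} [TopologicalSpace X] [CompactSpace X]
    [T2Space X] {A : Set (Set X)} (hA : ∀ a ∈ A, IsPreconnected a) (x : X) :
    IsConnected {y | finestRel A x y} := by
  have hclass : {y | finestRel A x y} = connectedComponentIn {y | finestRel A x y} x :=
    (connectedComponentIn_subset _ _).antisymm' fun _ hy =>
      hy _ (finestRel_equivalence A).componentRel
        ((finestRel_respects A).componentRel hA (finestRel_equivalence A))
  rw [hclass]
  exact isConnected_connectedComponentIn_iff.mpr ((finestRel_equivalence A).refl x)

/-- if `A` consists of connected sets then all classes of the finest closed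
equivalence relation respecting `A` are connected, and the quotient map is monotone. -/
theorem finestRel_classes_connected {X : Type*} [MetricSpace X] [CompactSpace X]
    (A : Set (Set X)) (hA : ∀ a ∈ A, IsConnected a)
    (s : Setoid X) (hs : ∀ x y, s.r x y ↔ finestRel A x y) :
    (∀ x : X, IsConnected {y | finestRel A x y}) ∧
    Continuous (Quotient.mk s) ∧ Function.Surjective (Quotient.mk s) ∧
    (∀ q : Quotient s, IsConnected ((Quotient.mk s) ⁻¹' {q})) := by
  have hclass := isConnected_setOf_finestRel (fun a ha => (hA a ha).isPreconnected)
  refine ⟨hclass, continuous_quotient_mk', Quotient.mk_surjective, ?_⟩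
  intro q
  obtain ⟨x, rfl⟩ := Quotient.mk_surjective q
  convert hclass x using 1
  ext y
  rw [mem_preimage, mem_singleton_iff, Quotient.eq, mem_ofPred_eq, hs]
  exact ⟨(finestRel_equivalence A).symm, (finestRel_equivalence A).symm⟩
end

section
/- A compact metric space X is finitely Suslinian if and only if X contains no non-degenerate limit continuum. -/
open Set Filter Metric Topology Function

/-!
If `C` is the Hausdorff limit of pairwise disjoint continua `Cₙ` and `C` is non-degenerate,
then, the diameter being continuous for the Hausdorff distance, eventually all `Cₙ` have
diameter at least `diam C / 2 > 0`: an infinite disjoint family of continua of uniformly positive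
diameter. Conversely, an infinite disjoint family of continua of diameter at least `ε` contains a
sequence which, the hyperspace of a compactum being compact, has a Hausdorff-convergent
subsequence. Its limit is connected, so it is a limit continuum, and its diameter is at least `ε`.
-/

open Bornology

section HausdorffDistance

variable {X : Type*} [MetricSpace X]

theorem exists_dist_lt_of_hausdorffEDist_lt_ofReal {s t : Set X} {x : X} {r : ℝ} (hx : x ∈ s)
    (h : hausdorffEDist s t < ENNReal.ofReal r) : ∃ y ∈ t, dist x y < r := by
  obtain ⟨y, hy, hxy⟩ := exists_edist_lt_of_hausdorffEDist_lt hx h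
  exact ⟨y, hy, edist_lt_ofReal.mp hxy⟩

theorem diam_le_diam_add_two_mul_hausdorffDist {s t : Set X} (ht : IsBounded t)
    (hfin : hausdorffEDist s t ≠ ⊤) : diam s ≤ diam t + 2 * hausdorffDist s t := by
  refine le_of_forall_pos_le_add fun ε hε => diam_le_of_forall_dist_le ?_ fun x hx y hy => ?_
  · have := diam_nonneg (s := t)
    have := hausdorffDist_nonneg (s := s) (t := t)
    linarith
  have hr : hausdorffDist s t < hausdorffDist s t + ε / 2 := by linarith
  obtain ⟨x', hx', hxx'⟩ := exists_dist_lt_of_hausdorffDist_lt hx hr hfin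
  obtain ⟨y', hy', hyy'⟩ := exists_dist_lt_of_hausdorffDist_lt hy hr hfin
  have := dist_triangle4_right x y x' y'
  have := dist_le_diam_of_mem ht hx' hy'
  linarith

theorem tendsto_diam_of_tendsto_hausdorffEDist {ι : Type*} {l : Filter ι} {F : ι → Set X}
    {K : Set X} (hF : ∀ i, IsBounded (F i)) (hK : IsBounded K)
    (h : Tendsto (fun i => hausdorffEDist (F i) K) l (𝓝 0)) :
    Tendsto (fun i => diam (F i)) l (𝓝 (diam K)) := by
  have hdist : Tendsto (fun i => 2 * hausdorffDist (F i) K) l (𝓝 0) := by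
    simpa [hausdorffDist] using ((ENNReal.tendsto_toReal ENNReal.zero_ne_top).comp h).const_mul 2
  have hfin : ∀ᶠ i in l, hausdorffEDist (F i) K ≠ ⊤ :=
    (h.eventually (gt_mem_nhds ENNReal.zero_lt_top)).mono fun i hi => hi.ne
  refine tendsto_iff_dist_tendsto_zero.2 <|
    squeeze_zero' (Eventually.of_forall fun _ => dist_nonneg) ?_ hdist
  filter_upwards [hfin] with i hi
  have h₁ := diam_le_diam_add_two_mul_hausdorffDist (hF i) (by rwa [hausdorffEDist_comm])
  have h₂ := diam_le_diam_add_two_mul_hausdorffDist hK hi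
  rw [hausdorffDist_comm] at h₁
  rw [Real.dist_eq, abs_sub_le_iff]
  constructor <;> linarith

theorem IsCompact.isPreconnected_of_tendsto_hausdorffEDist {ι : Type*} {l : Filter ι} [l.NeBot]
    {F : ι → Set X} {K : Set X} (hK : IsCompact K) (hF : ∀ i, IsPreconnected (F i))
    (h : Tendsto (fun i => hausdorffEDist (F i) K) l (𝓝 0)) : IsPreconnected K := by
  refine (isPreconnected_iff_subset_of_fully_disjoint_closed hK.isClosed).2
    fun u v hu hv hKuv huv => ?_
  have huv' : Disjoint (K ∩ u) v := huv.mono_left inter_subset_right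
  obtain ⟨δ, hδ, hsep⟩ := huv'.exists_thickenings (hK.inter_right hu) hv
  obtain ⟨i, hi⟩ := (h.eventually_lt_const (ENNReal.ofReal_pos.2 hδ)).exists
  have hcover : F i ⊆ thickening δ (K ∩ u) ∪ thickening δ v := by
    intro y hy
    obtain ⟨x, hxK, hyx⟩ := exists_dist_lt_of_hausdorffEDist_lt_ofReal hy hi
    rcases hKuv hxK with hxu | hxv
    · exact .inl (mem_thickening_iff.2 ⟨x, ⟨hxK, hxu⟩, hyx⟩)
    · exact .inr (mem_thickening_iff.2 ⟨x, hxv, hyx⟩)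
  have hfar : ∀ P Q : Set X, F i ⊆ thickening δ P →
      Disjoint (thickening δ P) (thickening δ Q) → ∀ x ∈ K, x ∉ Q := by
    intro P Q hFP hPQ x hxK hxQ
    obtain ⟨y, hy, hxy⟩ :=
      exists_dist_lt_of_hausdorffEDist_lt_ofReal hxK (hausdorffEDist_comm (s := F i) ▸ hi)
    exact disjoint_left.1 hPQ (hFP hy) (mem_thickening_iff.2 ⟨x, hxQ, by rwa [dist_comm]⟩)
  -- `F i` lies in one thickening, and every point of `K` is `δ`-close to `F i`,
  -- so `K` misses the other piece.
  rcases (hF i).subset_or_subset isOpen_thickening isOpen_thickening hsep hcover with hFu | hFv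
  · exact .inl fun x hxK => (hKuv hxK).resolve_right (hfar _ _ hFu hsep x hxK)
  · exact .inr fun x hxK => (hKuv hxK).resolve_left fun hxu =>
      hfar _ _ hFv hsep.symm x hxK ⟨hxK, hxu⟩

theorem exists_tendsto_hausdorffEDist_subseq [CompactSpace X] {F : ℕ → Set X}
    (hF : ∀ n, IsCompact (F n)) (hne : ∀ n, (F n).Nonempty) :
    ∃ K : Set X, IsCompact K ∧ K.Nonempty ∧ ∃ φ : ℕ → ℕ, StrictMono φ ∧
      Tendsto (fun n => hausdorffEDist (F (φ n)) K) atTop (𝓝 0) := by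
  obtain ⟨K, φ, hφ, hlim⟩ := CompactSpace.tendsto_subseq fun n =>
    (⟨⟨F n, hF n⟩, hne n⟩ : TopologicalSpace.NonemptyCompacts X)
  exact ⟨K, K.isCompact, K.nonempty, φ, hφ, tendsto_iff_edist_tendsto_0.1 hlim⟩

end HausdorffDistance

theorem injective_of_pairwise_disjoint {α ι : Type*} {F : ι → Set α}
    (hdisj : Pairwise (Disjoint on F)) (hne : ∀ i, (F i).Nonempty) : Injective F := by
  intro i j hij
  by_contra hij'
  have hdisj_ij : Disjoint (F i) (F j) := hdisj hij'
  rw [hij, disjoint_self] at hdisj_ij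
  exact (hne j).ne_empty hdisj_ij

section Suslinian

variable {X : Type*} [MetricSpace X]

theorem FinSus.subsingleton_of_isLimCont (hX : FinSus X) {C : Set X} (hC : IsLimCont C) :
    C.Subsingleton := by
  obtain ⟨hCc, -, F, hF, hdisj, hlim⟩ := hC
  by_contra hnt
  have hpos : 0 < diam C := diam_pos (not_subsingleton_iff.1 hnt) hCc.isBounded
  obtain ⟨N, hN⟩ := eventually_atTop.1 <|
    (tendsto_diam_of_tendsto_hausdorffEDist (fun n => (hF n).1.isBounded) hCc.isBounded
      hlim).eventually (lt_mem_nhds (half_lt_self hpos))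
  have hinj : Injective fun n => F (N + n) :=
    (injective_of_pairwise_disjoint hdisj fun n => (hF n).2.nonempty).comp (add_right_injective N)
  refine infinite_range_of_injective hinj (hX _ (half_pos hpos) _ ?_ ?_)
  · rintro _ ⟨n, rfl⟩
    exact ⟨(hF _).1, (hF _).2, (hN _ (Nat.le_add_right N n)).le⟩
  · rintro _ ⟨m, rfl⟩ _ ⟨n, rfl⟩ hmn
    exact hdisj fun h => hmn (congrArg F h)

theorem finSus_of_forall_isLimCont_subsingleton [CompactSpace X]
    (h : ∀ C : Set X, IsLimCont C → C.Subsingleton) : FinSus X := by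
  intro ε hε S hS hdisj
  by_contra hinf
  set e := Set.Infinite.natEmbedding S hinf
  set F : ℕ → Set X := fun n => e n
  have hF : ∀ n, IsCompact (F n) ∧ IsConnected (F n) ∧ ε ≤ diam (F n) :=
    fun n => hS _ (e n).2
  have hFdisj : Pairwise (Disjoint on F) := fun m n hmn =>
    hdisj (e m).2 (e n).2 fun h => hmn (e.injective (Subtype.ext h))
  obtain ⟨K, hK, hKne, φ, hφ, hlim⟩ :=
    exists_tendsto_hausdorffEDist_subseq (fun n => (hF n).1) fun n => (hF n).2.1.nonempty
  have hKlim : IsLimCont K :=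
    ⟨hK, ⟨hKne, hK.isPreconnected_of_tendsto_hausdorffEDist
      (fun _ => (hF _).2.1.isPreconnected) hlim⟩,
      F ∘ φ, fun _ => ⟨(hF _).1, (hF _).2.1⟩, hFdisj.comp_of_injective hφ.injective, hlim⟩
  have hε_le : ε ≤ diam K := ge_of_tendsto'
    (tendsto_diam_of_tendsto_hausdorffEDist (fun n => (hF _).1.isBounded) hK.isBounded hlim)
    fun n => (hF _).2.2
  rw [diam_subsingleton (h K hKlim)] at hε_le
  linarith

end Suslinian

/-- a compactum is finitely Suslinian iff it contains no non-degenerate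
limit continuum. -/
theorem finSus_iff_no_nondegenerate_limit_continuum
    {X : Type*} [MetricSpace X] [CompactSpace X] :
    FinSus X ↔ ∀ C : Set X, IsLimCont C → C.Subsingleton :=
  ⟨fun hX _ hC => hX.subsingleton_of_isLimCont hC, finSus_of_forall_isLimCont_subsingleton⟩
end

section
/- (Boundary Bumping) Let X be a compact connected metric space (continuum), let V ⊊ X be a proper open subset, and let Y be a connected component of V. Then the closure of Y intersects the boundary of V. -/
open Set Filter Metric Topology Function

/-!
If the closure of the component `K` of `x` in `V` stayed inside `V`, take an open `W ⊇ closure K`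
with `closure W ⊆ V`. The component of `x` in the compactum `closure W` lies in `K ⊆ W`, so by the
Šura-Bura theorem some set clopen in `closure W` contains `x` and lies in `W`; such a set is clopen
in the whole space, nonempty and missing `Vᶜ`, which contradicts connectedness.
-/

theorem exists_isClopen_mem_subset_of_connectedComponent_subset {X : Type*} [TopologicalSpace X]
    [T2Space X] [CompactSpace X] {x : X} {U : Set X} (hU : IsOpen U)
    (h : connectedComponent x ⊆ U) :
    ∃ B : Set X, IsClopen B ∧ x ∈ B ∧ B ⊆ U := by
  have hdisj : Uᶜ ∩ ⋂ s : { s : Set X // IsClopen s ∧ x ∈ s }, (s : Set X) = ∅ := by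
    rw [← connectedComponent_eq_iInter_isClopen, inter_comm]
    exact sdiff_eq_empty.mpr h
  obtain ⟨t, ht⟩ := hU.isClosed_compl.isCompact.elim_finite_subfamily_closed
    (fun s : { s : Set X // IsClopen s ∧ x ∈ s } => (s : Set X)) (fun s => s.2.1.1) hdisj
  refine ⟨⋂ s ∈ t, (s : Set X), isClopen_biInter_finset fun s _ => s.2.1,
    mem_iInter₂.mpr fun s _ => s.2.2, fun y hy => by_contra fun hyU => ht.subset ⟨hyU, hy⟩⟩

theorem exists_isClopen_mem_subset_of_connectedComponentIn_subset {X : Type*}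
    [TopologicalSpace X] [T2Space X] {A W : Set X} {x : X} (hA : IsCompact A) (hW : IsOpen W)
    (hWA : W ⊆ A) (hx : x ∈ A) (h : connectedComponentIn A x ⊆ W) :
    ∃ B : Set X, IsClopen B ∧ x ∈ B ∧ B ⊆ W := by
  have : CompactSpace A := isCompact_iff_compactSpace.mp hA
  have hcc : connectedComponent (⟨x, hx⟩ : A) ⊆ (↑) ⁻¹' W := by
    rw [← image_subset_iff, ← connectedComponentIn_eq_image hx]
    exact h
  obtain ⟨B, hB, hxB, hBW⟩ :=
    exists_isClopen_mem_subset_of_connectedComponent_subset (hW.preimage continuous_subtype_val) hcc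
  obtain ⟨O, hO, rfl⟩ := isOpen_induced_iff.mp hB.isOpen
  have hOW : O ∩ W = (↑) '' ((↑) ⁻¹' O : Set A) := by
    rw [Subtype.image_preimage_coe]
    refine Subset.antisymm (fun y hy => ⟨hWA hy.2, hy.1⟩) fun y hy => ⟨hy.2, ?_⟩
    exact image_subset_iff.mpr hBW (by rwa [Subtype.image_preimage_coe])
  refine ⟨O ∩ W, ⟨?_, hO.inter hW⟩, ⟨hxB, h (mem_connectedComponentIn hx)⟩, inter_subset_right⟩
  rw [hOW]
  exact (hB.isClosed.isCompact.image continuous_subtype_val).isClosed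

theorem not_closure_connectedComponentIn_subset {X : Type*} [TopologicalSpace X] [T2Space X]
    [CompactSpace X] [PreconnectedSpace X] {V : Set X} (hV : IsOpen V) (hVne : V ≠ univ)
    {x : X} (hx : x ∈ V) : ¬closure (connectedComponentIn V x) ⊆ V := by
  intro hKV
  obtain ⟨W, hW, hKW, hWV⟩ :=
    isClosed_closure.isCompact.exists_isOpen_closure_subset (hV.mem_nhdsSet.mpr hKV)
  have hccW : connectedComponentIn (closure W) x ⊆ W :=
    (connectedComponentIn_mono x hWV).trans (subset_closure.trans hKW)
  have hxW : x ∈ W := hKW (subset_closure (mem_connectedComponentIn hx))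
  obtain ⟨B, hB, hxB, hBW⟩ := exists_isClopen_mem_subset_of_connectedComponentIn_subset
    isClosed_closure.isCompact hW subset_closure (subset_closure hxW) hccW
  rcases isClopen_iff.mp hB with rfl | rfl
  · exact hxB
  · exact hVne (eq_univ_of_univ_subset (hBW.trans (subset_closure.trans hWV)))

/-- Boundary Bumping: in a continuum `X`, the closure of any connected
component of a proper open subset `V` meets the boundary of `V`. -/
theorem boundary_bumping
    {X : Type*} [MetricSpace X] [CompactSpace X] [ConnectedSpace X]
    (V : Set X) (hV : IsOpen V) (hVne : V ≠ Set.univ) (x : X) (hx : x ∈ V) :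
    (closure (connectedComponentIn V x) ∩ frontier V).Nonempty := by
  obtain ⟨y, hyK, hyV⟩ := not_subset.mp (not_closure_connectedComponentIn_subset hV hVne hx)
  rw [hV.frontier_eq]
  exact ⟨y, hyK, closure_mono (connectedComponentIn_subset V x) hyK, hyV⟩
end

section
/- Let X be an unshielded planar compactum and FS∼ the finest closed equivalence relation respecting the limit continua of X. For each component Y of X define x ∼_▲ y iff x and y lie in the same component Y of X and x FS∼_Y y (with FS∼_Y taken for limit continua of Y). Then ∼_▲ is finer than FS∼_X, i.e. every ∼_▲-class is contained in an FS∼_X-class. -/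
/-! A component `Y` of the compactum `X` is closed, and every limit continuum of `Y` is a
limit continuum of `X`. Hence each closed equivalence relation on `X` respecting the limit
continua of `X` restricts to one on `Y` respecting those of `Y`, and `FS∼_Y`, being the
intersection of all of the latter, is contained in `FS∼_X`. -/

open Set Filter Metric Topology Function

/-- A relation is closed on the subset `Z` if its graph restricted to `Z × Z` is closed. -/
def RelClosedOn {E : Type*} [MetricSpace E] (Z : Set E) (r : E → E → Prop) : Prop :=
  IsClosed {p : E × E | p.1 ∈ Z ∧ p.2 ∈ Z ∧ r p.1 p.2}

/-- A relation is an equivalence relation on the subset `Z`. -/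
def EquivOn {E : Type*} (Z : Set E) (r : E → E → Prop) : Prop :=
  (∀ x ∈ Z, r x x) ∧ (∀ x ∈ Z, ∀ y ∈ Z, r x y → r y x) ∧
  (∀ x ∈ Z, ∀ y ∈ Z, ∀ w ∈ Z, r x y → r y w → r x w)

/-- A relation on `Z` respects the limit continua of `Z` if it is closed and each limit
continuum of `Z` is contained in a single class. -/
def RespectsLimOn {E : Type*} [MetricSpace E] (Z : Set E) (r : E → E → Prop) : Prop :=
  RelClosedOn Z r ∧ ∀ C, LimContIn Z C → ∀ x ∈ C, ∀ y ∈ C, r x y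

/-- The finest closed equivalence relation on the subset `Z` respecting the family of
limit continua of `Z` (`FS∼_Z`). -/
def fsRelOn {E : Type*} [MetricSpace E] (Z : Set E) : E → E → Prop :=
  fun x y => x ∈ Z ∧ y ∈ Z ∧
    ∀ r : E → E → Prop, EquivOn Z r → RespectsLimOn Z r → r x y

theorem IsClosed.connectedComponentIn {E : Type*} [TopologicalSpace E] {F : Set E}
    (hF : IsClosed F) (x : E) : IsClosed (connectedComponentIn F x) := by
  by_cases hx : x ∈ F
  · refine closure_subset_iff_isClosed.mp ?_
    exact (isPreconnected_connectedComponentIn.closure).subset_connectedComponentIn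
      (subset_closure (mem_connectedComponentIn hx))
      (closure_minimal (connectedComponentIn_subset F x) hF)
  · rw [connectedComponentIn_eq_empty hx]
    exact isClosed_empty

section Mono

variable {E : Type*} {Y Z : Set E}

theorem EquivOn.mono {r : E → E → Prop} (h : EquivOn Z r) (hYZ : Y ⊆ Z) : EquivOn Y r :=
  ⟨fun a ha => h.1 a (hYZ ha),
    fun a ha b hb => h.2.1 a (hYZ ha) b (hYZ hb),
    fun a ha b hb c hc => h.2.2 a (hYZ ha) b (hYZ hb) c (hYZ hc)⟩

variable [MetricSpace E]

theorem SubcontIn.mono {C : Set E} (h : SubcontIn Y C) (hYZ : Y ⊆ Z) : SubcontIn Z C :=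
  ⟨h.1.trans hYZ, h.2⟩

theorem LimContIn.mono {C : Set E} (h : LimContIn Y C) (hYZ : Y ⊆ Z) : LimContIn Z C := by
  obtain ⟨hC, F, hF, hFdisj, hFlim⟩ := h
  exact ⟨hC.mono hYZ, F, fun n => (hF n).mono hYZ, hFdisj, hFlim⟩

theorem RelClosedOn.mono {r : E → E → Prop} (h : RelClosedOn Z r) (hY : IsClosed Y)
    (hYZ : Y ⊆ Z) : RelClosedOn Y r := by
  have hgraph : {p : E × E | p.1 ∈ Y ∧ p.2 ∈ Y ∧ r p.1 p.2}
      = Y ×ˢ Y ∩ {p : E × E | p.1 ∈ Z ∧ p.2 ∈ Z ∧ r p.1 p.2} := by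
    ext ⟨a, b⟩
    exact ⟨fun ⟨ha, hb, hab⟩ => ⟨⟨ha, hb⟩, hYZ ha, hYZ hb, hab⟩,
      fun ⟨⟨ha, hb⟩, _, _, hab⟩ => ⟨ha, hb, hab⟩⟩
  unfold RelClosedOn
  rw [hgraph]
  exact (hY.prod hY).inter h

theorem RespectsLimOn.mono {r : E → E → Prop} (h : RespectsLimOn Z r) (hY : IsClosed Y)
    (hYZ : Y ⊆ Z) : RespectsLimOn Y r :=
  ⟨h.1.mono hY hYZ, fun C hC => h.2 C (hC.mono hYZ)⟩

theorem fsRelOn_mono (hY : IsClosed Y) (hYZ : Y ⊆ Z) {x y : E} (h : fsRelOn Y x y) :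
    fsRelOn Z x y := by
  obtain ⟨hx, hy, hmin⟩ := h
  exact ⟨hYZ hx, hYZ hy, fun r hr hresp => hmin r (hr.mono hYZ) (hresp.mono hY hYZ)⟩

end Mono

theorem componentwise_rel_finer_general
    (X : Set ℂ) (hXc : IsCompact X) :
    ∀ x y : ℂ, x ∈ X → y ∈ connectedComponentIn X x →
      fsRelOn (connectedComponentIn X x) x y → fsRelOn X x y := fun x _ _ _ =>
  fsRelOn_mono (hXc.isClosed.connectedComponentIn x) (connectedComponentIn_subset X x)

/-- the componentwise relation `∼_▲` (defined by applying `FS∼` inside each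
connected component of `X`) is finer than `FS∼_X`. -/
theorem componentwise_rel_finer
    (X : Set ℂ) (hXc : IsCompact X) (hXu : Unshielded X) :
    ∀ x y : ℂ, x ∈ X → y ∈ connectedComponentIn X x →
      fsRelOn (connectedComponentIn X x) x y → fsRelOn X x y :=
  componentwise_rel_finer_general X hXc
end

section
/- Let X = A × [-1,1] ⊂ ℝ², where A ⊂ (0,1] is a Cantor set. Let FS∼ be the finest closed equivalence relation on X respecting the family of limit continua. Then each FS∼-class equals a fiber {a} × [-1,1] (a ∈ A), so X/FS∼ is homeomorphic to the Cantor set A, whereas each component {a} × [-1,1] of X contains no non-degenerate limit continuum of itself. -/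
open Set Filter Metric Topology Function

/-!
A fiber `{a} × [-1,1]` is the Hausdorff limit of the fibers over distinct points of the perfect
set `A` converging to `a`, hence a limit continuum of `X`. Since `A` is totally disconnected,
every subcontinuum of `X` lies in a single fiber, so "same first coordinate" is already a closed
equivalence relation respecting the limit continua; thus the `FS∼`-classes are the fibers.
Inside one fiber, pairwise disjoint subcontinua project to disjoint intervals of `[-1,1]`, whose
lengths tend to `0`, so their Hausdorff limit is a point.
-/

open MeasureTheory

section Segment

lemma tendsto_measure_zero_of_pairwise_disjoint {α : Type*} [MeasurableSpace α] {μ : Measure α}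
    {s : ℕ → Set α} (hd : Pairwise (Disjoint on s)) (hm : ∀ n, NullMeasurableSet (s n) μ)
    (hfin : μ (⋃ n, s n) ≠ ⊤) : Tendsto (fun n => μ (s n)) atTop (𝓝 0) :=
  ENNReal.tendsto_atTop_zero_of_tsum_ne_top <| by
    rwa [← measure_iUnion₀ (hd.mono fun _ _ h => h.aedisjoint) hm]

lemma Real.ofReal_dist_le_volume_of_isPreconnected {s : Set ℝ} (hs : IsPreconnected s)
    {x y : ℝ} (hx : x ∈ s) (hy : y ∈ s) : ENNReal.ofReal (dist x y) ≤ volume s := by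
  calc ENNReal.ofReal (dist x y) = volume (uIcc x y) := by
        rw [Real.volume_interval, Real.dist_eq, abs_sub_comm]
    _ ≤ volume s := measure_mono (hs.ordConnected.uIcc_subset hx hy)

lemma exists_dist_lt_of_hausdorffEDist_lt {α : Type*} [PseudoMetricSpace α] {C F : Set α}
    {x y : α} (hx : x ∈ C) (hy : y ∈ C) {r : ℝ}
    (h : Metric.hausdorffEDist C F < ENNReal.ofReal r) :
    ∃ u ∈ F, ∃ v ∈ F, dist x y < dist u v + 2 * r := by
  obtain ⟨u, hu, hxu⟩ := Metric.exists_edist_lt_of_hausdorffEDist_lt hx h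
  obtain ⟨v, hv, hyv⟩ := Metric.exists_edist_lt_of_hausdorffEDist_lt hy h
  rw [edist_lt_ofReal] at hxu hyv
  refine ⟨u, hu, v, hv, ?_⟩
  linarith [dist_triangle4 x u v y, dist_comm v y]

theorem LimContIn.subsingleton_of_singleton_prod {α : Type*} [MetricSpace α] {a : α}
    {T : Set ℝ} (hT : volume T ≠ ⊤) {C : Set (α × ℝ)} (h : LimContIn ({a} ×ˢ T) C) :
    C.Subsingleton := by
  intro x hx y hy
  by_contra hxy
  obtain ⟨-, F, hF, hdisj, hlim⟩ := h
  have hδ : 0 < dist x y := dist_pos.mpr hxy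
  have hinj : InjOn Prod.snd ({a} ×ˢ T) := fun p hp q hq hpq =>
    Prod.ext (hp.1.trans hq.1.symm) hpq
  have hdist : ∀ n, ∀ u ∈ F n, ∀ v ∈ F n, dist u v = dist u.2 v.2 := by
    intro n u hu v hv
    rw [Prod.dist_eq, ((hF n).1 hu).1, ((hF n).1 hv).1, dist_self, max_eq_right dist_nonneg]
  set G : ℕ → Set ℝ := fun n => Prod.snd '' F n
  have hGdisj : Pairwise (Disjoint on G) := fun m n hmn => by
    simp only [onFun, G, disjoint_iff_inter_eq_empty, ← hinj.image_inter (hF m).1 (hF n).1,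
      (hdisj hmn).inter_eq, image_empty]
  have hGsmall : Tendsto (fun n => volume (G n)) atTop (𝓝 0) := by
    refine tendsto_measure_zero_of_pairwise_disjoint hGdisj
      (fun n => ((hF n).2.1.image continuous_snd).isClosed.measurableSet.nullMeasurableSet)
      (ne_top_of_le_ne_top hT (measure_mono ?_))
    rintro _ ⟨_, ⟨n, rfl⟩, ⟨p, hp, rfl⟩⟩
    exact ((hF n).1 hp).2
  have hGlarge : ∀ᶠ n in atTop, ENNReal.ofReal (dist x y / 2) ≤ volume (G n) := by
    filter_upwards [hlim.eventually (gt_mem_nhds (ENNReal.ofReal_pos.mpr (by linarith :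
      0 < dist x y / 4)))] with n hn
    obtain ⟨u, hu, v, hv, huv⟩ :=
      exists_dist_lt_of_hausdorffEDist_lt hx hy (Metric.hausdorffEDist_comm.trans_lt hn)
    calc ENNReal.ofReal (dist x y / 2) ≤ ENNReal.ofReal (dist u.2 v.2) :=
          ENNReal.ofReal_le_ofReal (by linarith [hdist n u hu v hv])
      _ ≤ volume (G n) := Real.ofReal_dist_le_volume_of_isPreconnected
          ((hF n).2.2.image _ continuous_snd.continuousOn).isPreconnected
          ⟨u, hu, rfl⟩ ⟨v, hv, rfl⟩
  obtain ⟨n, hsmall, hlarge⟩ :=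
    ((hGsmall.eventually (gt_mem_nhds (ENNReal.ofReal_pos.mpr (by linarith :
      0 < dist x y / 2)))).and hGlarge).exists
  exact hsmall.not_ge hlarge

end Segment

section Fibers

variable {α β : Type*} [MetricSpace α] [MetricSpace β]

lemma Perfect.exists_injective_tendsto {A : Set α} (hA : Perfect A) {a : α} (ha : a ∈ A) :
    ∃ g : ℕ → α, (∀ n, g n ∈ A) ∧ Injective g ∧ Tendsto g atTop (𝓝 a) := by
  have hcl : a ∈ closure (A \ {a}) :=
    mem_closure_iff_nhdsWithin_neBot.2 (accPt_principal_iff_nhdsWithin.1 (hA.acc a ha))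
  obtain ⟨u, huA, hu⟩ := mem_closure_iff_seq_limit.1 hcl
  -- Passing to a subsequence along which `dist (u n) a` strictly decreases makes it injective.
  have hinv : Tendsto (fun n => (dist (u n) a)⁻¹) atTop atTop :=
    Tendsto.inv_tendsto_nhdsGT_zero <| tendsto_nhdsWithin_iff.2
      ⟨(tendsto_iff_dist_tendsto_zero).1 hu,
        Eventually.of_forall fun n => dist_pos.2 (huA n).2⟩
  obtain ⟨φ, hφ, hmono⟩ := strictMono_subseq_of_tendsto_atTop hinv
  refine ⟨u ∘ φ, fun n => (huA (φ n)).1, fun m n hmn => hmono.injective ?_,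
    hu.comp hφ.tendsto_atTop⟩
  simp only [comp_apply] at hmn ⊢
  rw [hmn]

lemma SubcontIn.fst_eq_of_isTotallyDisconnected {A : Set α} {B : Set β}
    (hA : IsTotallyDisconnected A) {C : Set (α × β)} (hC : SubcontIn (A ×ˢ B) C)
    {x y : α × β} (hx : x ∈ C) (hy : y ∈ C) : x.1 = y.1 :=
  hA _ (image_subset_iff.2 fun _ hz => (hC.1 hz).1)
    (hC.2.2.image _ continuous_fst.continuousOn).isPreconnected ⟨x, hx, rfl⟩ ⟨y, hy, rfl⟩

lemma hausdorffEDist_singleton_prod_le (b c : α) (B : Set β) :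
    Metric.hausdorffEDist ({b} ×ˢ B) ({c} ×ˢ B) ≤ edist b c := by
  apply Metric.hausdorffEDist_le_of_mem_edist
  · rintro ⟨_, t⟩ ⟨rfl, ht⟩
    exact ⟨(c, t), ⟨rfl, ht⟩, by simp [Prod.edist_eq]⟩
  · rintro ⟨_, t⟩ ⟨rfl, ht⟩
    exact ⟨(b, t), ⟨rfl, ht⟩, by simp [Prod.edist_eq, edist_comm]⟩

lemma subcontIn_singleton_prod {A : Set α} {B : Set β} {a : α} (ha : a ∈ A)
    (hBc : IsCompact B) (hBconn : IsConnected B) : SubcontIn (A ×ˢ B) ({a} ×ˢ B) :=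
  ⟨prod_mono (singleton_subset_iff.2 ha) subset_rfl, isCompact_singleton.prod hBc,
    isConnected_singleton.prod hBconn⟩

lemma limContIn_singleton_prod {A : Set α} {B : Set β} (hA : Perfect A) {a : α} (ha : a ∈ A)
    (hBc : IsCompact B) (hBconn : IsConnected B) : LimContIn (A ×ˢ B) ({a} ×ˢ B) := by
  obtain ⟨g, hgA, hginj, hg⟩ := hA.exists_injective_tendsto ha
  refine ⟨subcontIn_singleton_prod ha hBc hBconn, fun n => {g n} ×ˢ B,
    fun n => subcontIn_singleton_prod (hgA n) hBc hBconn, fun m n hmn => ?_, ?_⟩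
  · exact disjoint_prod.2 (Or.inl (disjoint_singleton.2 (hginj.ne hmn)))
  · exact tendsto_of_tendsto_of_tendsto_of_le_of_le tendsto_const_nhds
      (tendsto_iff_edist_tendsto_0.1 hg) (fun _ => bot_le)
      (fun n => hausdorffEDist_singleton_prod_le (g n) a B)

lemma relClosedOn_fst_eq {Z : Set (α × β)} (hZ : IsClosed Z) :
    RelClosedOn Z (fun p q => p.1 = q.1) :=
  (hZ.preimage continuous_fst).inter <| (hZ.preimage continuous_snd).inter <|
    isClosed_eq (continuous_fst.comp continuous_fst) (continuous_fst.comp continuous_snd)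

theorem fsRelOn_prod_iff {A : Set α} {B : Set β} (hAc : IsClosed A) (hAp : Perfect A)
    (hAtd : IsTotallyDisconnected A) (hBc : IsCompact B) (hBconn : IsConnected B)
    {p q : α × β} :
    fsRelOn (A ×ˢ B) p q ↔ p ∈ A ×ˢ B ∧ q ∈ A ×ˢ B ∧ p.1 = q.1 := by
  constructor
  · rintro ⟨hp, hq, hall⟩
    refine ⟨hp, hq, hall (fun p q => p.1 = q.1)
      ⟨fun _ _ => rfl, fun _ _ _ _ => Eq.symm, fun _ _ _ _ _ _ => Eq.trans⟩
      ⟨relClosedOn_fst_eq (hAc.prod hBc.isClosed), fun C hC _ hx _ hy =>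
        hC.1.fst_eq_of_isTotallyDisconnected hAtd hx hy⟩⟩
  · rintro ⟨hp, hq, hpq⟩
    exact ⟨hp, hq, fun r _ hr => hr.2 _ (limContIn_singleton_prod hAp hp.1 hBc hBconn)
      p ⟨rfl, hp.2⟩ q ⟨hpq.symm, hq.2⟩⟩

end Fibers

lemma Continuous.nonempty_quotient_ker_homeomorph {X Y : Type*} [TopologicalSpace X]
    [TopologicalSpace Y] [CompactSpace X] [T2Space Y] {f : X → Y} (hf : Continuous f)
    (hsurj : Surjective f) : Nonempty (Quotient (Setoid.ker f) ≃ₜ Y) :=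
  ⟨Continuous.homeoOfEquivCompactToT2 (f := Setoid.quotientKerEquivOfSurjective f hsurj)
    (hf.quotient_lift _)⟩

theorem cantor_times_interval_fs_classes_general
    (A : Set ℝ)
    (hAc : IsCompact A) (hAp : Perfect A) (hAtd : IsTotallyDisconnected A) :
    (∀ p ∈ A ×ˢ Set.Icc (-1:ℝ) 1,
        {q : ℝ × ℝ | fsRelOn (A ×ˢ Set.Icc (-1:ℝ) 1) p q}
          = ({p.1} : Set ℝ) ×ˢ Set.Icc (-1:ℝ) 1) ∧
    (∃ s : Setoid (A ×ˢ Set.Icc (-1:ℝ) 1 : Set (ℝ × ℝ)),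
        (∀ x y : (A ×ˢ Set.Icc (-1:ℝ) 1 : Set (ℝ × ℝ)),
          s.r x y ↔ fsRelOn (A ×ˢ Set.Icc (-1:ℝ) 1) ↑x ↑y) ∧
        Nonempty (Quotient s ≃ₜ A)) ∧
    (∀ a ∈ A, ∀ C : Set (ℝ × ℝ),
        LimContIn (({a} : Set ℝ) ×ˢ Set.Icc (-1:ℝ) 1) C → C.Subsingleton) := by
  have hfs : ∀ {p q : ℝ × ℝ}, fsRelOn (A ×ˢ Icc (-1 : ℝ) 1) p q ↔
      p ∈ A ×ˢ Icc (-1 : ℝ) 1 ∧ q ∈ A ×ˢ Icc (-1 : ℝ) 1 ∧ p.1 = q.1 :=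
    fsRelOn_prod_iff hAc.isClosed hAp hAtd isCompact_Icc (isConnected_Icc (by norm_num))
  have : CompactSpace (A ×ˢ Icc (-1 : ℝ) 1) :=
    isCompact_iff_compactSpace.1 (hAc.prod isCompact_Icc)
  let f : (A ×ˢ Icc (-1 : ℝ) 1 : Set (ℝ × ℝ)) → A := fun x => ⟨x.1.1, x.2.1⟩
  refine ⟨fun p hp => ?_, ⟨Setoid.ker f, fun x y => ?_, ?_⟩, fun a _ C hC => ?_⟩
  · ext q
    simp only [mem_ofPred_eq, hfs, mem_prod, mem_singleton_iff]
    constructor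
    · rintro ⟨-, ⟨-, hq⟩, hpq⟩
      exact ⟨hpq.symm, hq⟩
    · rintro ⟨hpq, hq⟩
      exact ⟨hp, ⟨hpq ▸ hp.1, hq⟩, hpq.symm⟩
  · rw [hfs, Setoid.ker_def, Subtype.ext_iff]
    exact ⟨fun h => ⟨x.2, y.2, h⟩, fun h => h.2.2⟩
  · exact Continuous.nonempty_quotient_ker_homeomorph (by fun_prop)
      fun a => ⟨⟨(a, 0), a.2, by norm_num⟩, rfl⟩
  · exact LimContIn.subsingleton_of_singleton_prod (by simp [Real.volume_Icc]) hC

/-- for `X = A × [-1,1]` with `A ⊂ (0,1]` a Cantor set, the classes of the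
finest closed equivalence relation respecting the limit continua of `X` are exactly the
fibers `{a} × [-1,1]`, so the quotient is homeomorphic to `A`, even though each component
`{a} × [-1,1]` contains no non-degenerate limit continuum of itself. -/
theorem cantor_times_interval_fs_classes
    (A : Set ℝ) (hA1 : A ⊆ Set.Ioc 0 1) (hAne : A.Nonempty)
    (hAc : IsCompact A) (hAp : Perfect A) (hAtd : IsTotallyDisconnected A) :
    (∀ p ∈ A ×ˢ Set.Icc (-1:ℝ) 1,
        {q : ℝ × ℝ | fsRelOn (A ×ˢ Set.Icc (-1:ℝ) 1) p q}
          = ({p.1} : Set ℝ) ×ˢ Set.Icc (-1:ℝ) 1) ∧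
    (∃ s : Setoid (A ×ˢ Set.Icc (-1:ℝ) 1 : Set (ℝ × ℝ)),
        (∀ x y : (A ×ˢ Set.Icc (-1:ℝ) 1 : Set (ℝ × ℝ)),
          s.r x y ↔ fsRelOn (A ×ˢ Set.Icc (-1:ℝ) 1) ↑x ↑y) ∧
        Nonempty (Quotient s ≃ₜ A)) ∧
    (∀ a ∈ A, ∀ C : Set (ℝ × ℝ),
        LimContIn (({a} : Set ℝ) ×ˢ Set.Icc (-1:ℝ) 1) C → C.Subsingleton) :=
  cantor_times_interval_fs_classes_general A hAc hAp hAtd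
end

section
/- Let X be a planar compactum, A the family of its limit continua, and (∼_α) the transfinite sequence of equivalence relations: x ∼_0 y iff x and y lie in a connected finite union of limit continua; for successor α = β+1, x ∼_α y iff x and y are joined by a continuum which is a finite union of Hausdorff limits of sequences of ∼_β-classes; for limit α, ∼_α = ⋃_{β<α} ∼_β. Then the sequence stabilizes at the first uncountable ordinal Ω, i.e. ∼_Ω = ∼_{Ω+1}. -/
open Set Filter Metric Topology Function

/-- The class of `z` under the relation `r`. -/
def classOf {E : Type*} (r : E → E → Prop) (z : E) : Set E := {w | r z w}

/-- The relation `∼₀`: `x ∼₀ y` iff `x` and `y` lie in a connected finite union of limit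
continua of `X` (together with the identity, making the relation reflexive). -/
def rel0 (X : Set ℂ) : ℂ → ℂ → Prop := fun x y =>
  x = y ∨ ∃ (n : ℕ) (F : Fin n → Set ℂ),
    (∀ i, LimContIn X (F i)) ∧ IsConnected (⋃ i, F i) ∧
    x ∈ ⋃ i, F i ∧ y ∈ ⋃ i, F i

/-- The successor step: `x ∼_{β+1} y` iff `x` and `y` are joined by a continuum which is a
finite union of Hausdorff limits of sequences of (closures of) `∼_β`-classes. -/
def succRel (X : Set ℂ) (r : ℂ → ℂ → Prop) : ℂ → ℂ → Prop := fun x y =>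
  x = y ∨ ∃ (n : ℕ) (L : Fin n → Set ℂ),
    (∀ i, ∃ K : ℕ → Set ℂ, (∀ m, ∃ z ∈ X, K m = classOf r z) ∧
      Tendsto (fun m => EMetric.hausdorffEdist (closure (K m)) (L i)) atTop (nhds 0)) ∧
    IsCompact (⋃ i, L i) ∧ IsConnected (⋃ i, L i) ∧
    x ∈ ⋃ i, L i ∧ y ∈ ⋃ i, L i

/-- The transfinite sequence `(∼_α)` of relations generated by the limit continua of `X`. -/
noncomputable def seqRel (X : Set ℂ) : Ordinal → (ℂ → ℂ → Prop) := fun o =>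
  Ordinal.limitRecOn o (rel0 X) (fun _ r => succRel X r)
    (fun o _ ih => fun x y => ∃ (β : Ordinal) (h : β < o), ih β h x y)

/-!
The relations `∼_α` increase with `α`, and each of them identifies only points of `X` and has
connected classes; so the closure of a class is a continuum in `X`, which makes `∼_α ⊆ ∼_{α+1}`.
For each point `w`, the closures of its `∼_β`-classes, `β < Ω`, increase, and in a second countable
space such a chain of closed sets is already exhausted at a countable stage. A pair related by
`∼_{Ω+1}` is witnessed by countably many `∼_Ω`-classes; at some countable stage `β` all their
closures have reached their final value, so the pair is already related by `∼_{β+1} ⊆ ∼_Ω`.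
-/

open Ordinal

section General

variable {α : Type*}

theorem subset_of_tendsto_hausdorffEDist [PseudoEMetricSpace α] {ι : Type*} {l : Filter ι}
    [l.NeBot] {K : ι → Set α} {L s : Set α} (hs : IsClosed s) (hK : ∀ m, K m ⊆ s)
    (hKL : Tendsto (fun m => hausdorffEDist (K m) L) l (𝓝 0)) : L ⊆ s := by
  intro p hp
  have hbound : ∀ m, infEDist p s ≤ hausdorffEDist (K m) L := fun m =>
    calc infEDist p s ≤ infEDist p (K m) := infEDist_anti (hK m)
      _ ≤ hausdorffEDist L (K m) := infEDist_le_hausdorffEDist_of_mem hp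
      _ = hausdorffEDist (K m) L := hausdorffEDist_comm
  exact (mem_iff_infEDist_zero_of_closed hs).2 (nonpos_iff_eq_zero.1 (ge_of_tendsto' hKL hbound))

theorem exists_lt_omega_one_closure_eq [TopologicalSpace α] [SecondCountableTopology α]
    {ι : Type*} [Countable ι] {s : ι → Ordinal → Set α} (hs : ∀ i, Monotone (s i)) :
    ∃ β < ω₁, ∀ i, closure (s i β) = closure (⋃ γ < ω₁, s i γ) := by
  obtain ⟨b, hbc, -, hb⟩ := TopologicalSpace.exists_countable_basis α
  have : Countable b := hbc.to_subtype
  have hstage : ∀ p : ι × b, ∃ γ < ω₁,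
      ((p.2 : Set α) ∩ ⋃ δ < ω₁, s p.1 δ).Nonempty → ((p.2 : Set α) ∩ s p.1 γ).Nonempty := by
    rintro ⟨i, B⟩
    by_cases hB : ((B : Set α) ∩ ⋃ δ < ω₁, s i δ).Nonempty
    · obtain ⟨u, huB, hu⟩ := hB
      obtain ⟨γ, hγ, huγ⟩ := mem_iUnion₂.1 hu
      exact ⟨γ, hγ, fun _ => ⟨u, huB, huγ⟩⟩
    · exact ⟨0, omega_pos 1, fun h => absurd h hB⟩
  choose g hgω hg using hstage
  refine ⟨⨆ p, g p, iSup_lt_omega_one hgω, fun i => ?_⟩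
  refine (closure_mono (subset_biUnion_of_mem (u := s i) (iSup_lt_omega_one hgω))).antisymm ?_
  intro u hu
  refine hb.mem_closure_iff.2 fun B hB huB => ?_
  have hmeet := hg (i, ⟨B, hB⟩) (hb.mem_closure_iff.1 hu B hB huB)
  exact hmeet.mono (inter_subset_inter_right _ (hs i (Ordinal.le_iSup g (i, ⟨B, hB⟩))))

end General

theorem classOf_mono {E : Type*} {r s : E → E → Prop} (h : r ≤ s) (z : E) :
    classOf r z ⊆ classOf s z := fun w hw => h z w hw

structure ConnectedClassesOn {E : Type*} [TopologicalSpace E] (X : Set E) (r : E → E → Prop) :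
    Prop where
  refl : ∀ x, r x x
  mem_of_ne : ∀ ⦃x y⦄, r x y → x ≠ y → x ∈ X ∧ y ∈ X
  isPreconnected_classOf : ∀ x, IsPreconnected (classOf r x)

section ConnectedClasses

variable {E : Type*} [TopologicalSpace E] {X : Set E} {r : E → E → Prop}

theorem isPreconnected_classOf_of_forall (x : E)
    (h : ∀ y, r x y → x ≠ y → ∃ t, IsPreconnected t ∧ x ∈ t ∧ y ∈ t ∧ ∀ w ∈ t, r x w) :
    IsPreconnected (classOf r x) := by
  refine isPreconnected_of_forall x fun y hy => ?_
  by_cases hxy : x = y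
  · exact ⟨{x}, singleton_subset_iff.2 (hxy ▸ hy), rfl, hxy ▸ rfl, isPreconnected_singleton⟩
  · obtain ⟨t, ht, hxt, hyt, htr⟩ := h y hy hxy
    exact ⟨t, htr, hxt, hyt, ht⟩

theorem ConnectedClassesOn.classOf_subset (h : ConnectedClassesOn X r) {z : E} (hz : z ∈ X) :
    classOf r z ⊆ X := fun w hw => by
  by_cases hzw : z = w
  · exact hzw ▸ hz
  · exact (h.mem_of_ne hw hzw).2

end ConnectedClasses

section Relations

variable {X : Set ℂ} {r : ℂ → ℂ → Prop}

theorem connectedClassesOn_rel0 : ConnectedClassesOn X (rel0 X) := by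
  refine ⟨fun x => Or.inl rfl, ?_, fun x => isPreconnected_classOf_of_forall x ?_⟩
  · rintro x y (rfl | ⟨n, F, hF, -, hx, hy⟩) hne
    · exact absurd rfl hne
    · have hFX : (⋃ i, F i) ⊆ X := iUnion_subset fun i => (hF i).1.1
      exact ⟨hFX hx, hFX hy⟩
  · rintro y (rfl | ⟨n, F, hF, hconn, hx, hy⟩) hne
    · exact absurd rfl hne
    · exact ⟨_, hconn.isPreconnected, hx, hy, fun w hw => Or.inr ⟨n, F, hF, hconn, hx, hw⟩⟩

theorem iUnion_subset_of_succRel (hX : IsClosed X) (hr : ConnectedClassesOn X r) {n : ℕ}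
    {L : Fin n → Set ℂ}
    (hL : ∀ i, ∃ K : ℕ → Set ℂ, (∀ m, ∃ z ∈ X, K m = classOf r z) ∧
      Tendsto (fun m => hausdorffEDist (closure (K m)) (L i)) atTop (𝓝 0)) :
    (⋃ i, L i) ⊆ X := by
  refine iUnion_subset fun i => ?_
  obtain ⟨K, hK, hKL⟩ := hL i
  refine subset_of_tendsto_hausdorffEDist hX (fun m => ?_) hKL
  obtain ⟨z, hz, hKz⟩ := hK m
  rw [hKz]
  exact closure_minimal (hr.classOf_subset hz) hX

theorem connectedClassesOn_succRel (hX : IsClosed X) (hr : ConnectedClassesOn X r) :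
    ConnectedClassesOn X (succRel X r) := by
  refine ⟨fun x => Or.inl rfl, ?_, fun x => isPreconnected_classOf_of_forall x ?_⟩
  · rintro x y (rfl | ⟨n, L, hL, -, -, hx, hy⟩) hne
    · exact absurd rfl hne
    · have hLX := iUnion_subset_of_succRel hX hr hL
      exact ⟨hLX hx, hLX hy⟩
  · rintro y (rfl | ⟨n, L, hL, hcpt, hconn, hx, hy⟩) hne
    · exact absurd rfl hne
    · exact ⟨_, hconn.isPreconnected, hx, hy,
        fun w hw => Or.inr ⟨n, L, hL, hcpt, hconn, hx, hw⟩⟩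

/-- A single piece suffices: the closure of the class of `x`, the limit of a constant sequence,
is a continuum because the class is a connected subset of the compact set `X`. -/
theorem ConnectedClassesOn.le_succRel (hX : IsCompact X) (hr : ConnectedClassesOn X r) :
    r ≤ succRel X r := by
  intro x y hxy
  by_cases hne : x = y
  · exact Or.inl hne
  have hx : x ∈ X := (hr.mem_of_ne hxy hne).1
  have hclX : closure (classOf r x) ⊆ X := closure_minimal (hr.classOf_subset hx) hX.isClosed
  refine Or.inr ⟨1, fun _ => closure (classOf r x),
    fun _ => ⟨fun _ => classOf r x, fun _ => ⟨x, hx, rfl⟩, ?_⟩, ?_, ?_, ?_, ?_⟩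
  · exact tendsto_const_nhds.congr fun _ => hausdorffEDist_self.symm
  · rw [iUnion_const]
    exact hX.of_isClosed_subset isClosed_closure hclX
  · rw [iUnion_const]
    exact ⟨⟨x, subset_closure (hr.refl x)⟩, (hr.isPreconnected_classOf x).closure⟩
  · exact mem_iUnion.2 ⟨0, subset_closure (hr.refl x)⟩
  · exact mem_iUnion.2 ⟨0, subset_closure hxy⟩

end Relations

section SeqRel

universe u

variable {X : Set ℂ}

theorem seqRel_zero (X : Set ℂ) : seqRel X 0 = rel0 X :=
  limitRecOn_zero ..

theorem seqRel_add_one (X : Set ℂ) (o : Ordinal) : seqRel X (o + 1) = succRel X (seqRel X o) :=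
  limitRecOn_add_one ..

theorem seqRel_of_isSuccLimit (X : Set ℂ) {o : Ordinal} (ho : Order.IsSuccLimit o) {x y : ℂ} :
    seqRel X o x y ↔ ∃ β < o, seqRel X β x y := by
  simp only [seqRel, limitRecOn_limit _ _ _ _ ho, exists_prop]

theorem classOf_seqRel_of_isSuccLimit (X : Set ℂ) {o : Ordinal} (ho : Order.IsSuccLimit o)
    (x : ℂ) : classOf (seqRel X o) x = ⋃ β < o, classOf (seqRel X β) x := by
  ext w
  simp only [mem_iUnion₂, exists_prop]
  exact seqRel_of_isSuccLimit X ho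

theorem connectedClassesOn_seqRel (hX : IsClosed X) (o : Ordinal) :
    ConnectedClassesOn X (seqRel X o) := by
  induction o using limitRecOn with
  | zero => exact seqRel_zero X ▸ connectedClassesOn_rel0
  | add_one o ih => exact seqRel_add_one X o ▸ connectedClassesOn_succRel hX ih
  | limit o ho ih =>
    refine ⟨fun x => (seqRel_of_isSuccLimit X ho).2 ⟨0, ho.pos, (ih 0 ho.pos).refl x⟩,
      fun x y hxy hne => ?_, fun x => isPreconnected_of_forall x fun y hy => ?_⟩
    · obtain ⟨β, hβ, hxy⟩ := (seqRel_of_isSuccLimit X ho).1 hxy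
      exact (ih β hβ).mem_of_ne hxy hne
    · obtain ⟨β, hβ, hxy⟩ := (seqRel_of_isSuccLimit X ho).1 hy
      refine ⟨classOf (seqRel X β) x, fun w hw => (seqRel_of_isSuccLimit X ho).2 ⟨β, hβ, hw⟩,
        (ih β hβ).refl x, hxy, (ih β hβ).isPreconnected_classOf x⟩

theorem seqRel_monotone (hX : IsCompact X) : Monotone (seqRel X) := by
  intro β γ hβγ
  induction γ using limitRecOn with
  | zero => rw [nonpos_iff_eq_zero.1 hβγ]
  | add_one γ ih =>
    rcases hβγ.lt_or_eq with h | rfl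
    · rw [seqRel_add_one]
      exact (ih (Order.lt_add_one_iff.1 h)).trans
        ((connectedClassesOn_seqRel hX.isClosed γ).le_succRel hX)
    · exact le_rfl
  | limit γ hγ _ =>
    rcases hβγ.lt_or_eq with h | rfl
    · exact fun x y hxy => (seqRel_of_isSuccLimit X hγ).2 ⟨β, h, hxy⟩
    · exact le_rfl

theorem seqRel_omega_one_add_one (hX : IsCompact X) :
    seqRel.{u} X (ω₁ + 1) = seqRel.{u} X ω₁ := by
  have hlim : Order.IsSuccLimit ω₁ := Cardinal.isSuccLimit_omega 1
  refine le_antisymm ?_ (seqRel_monotone hX le_self_add)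
  rw [seqRel_add_one]
  rintro x y (rfl | ⟨n, L, hL, hcpt, hconn, hx, hy⟩)
  · exact (connectedClassesOn_seqRel hX.isClosed _).refl x
  choose K hK hKL using hL
  choose z hzX hKz using hK
  obtain ⟨β, hβ, hclosure⟩ := exists_lt_omega_one_closure_eq (ι := Fin n × ℕ)
    (s := fun p γ => classOf (seqRel X γ) (z p.1 p.2))
    fun p _ _ h => classOf_mono (seqRel_monotone hX h) _
  have hcl : ∀ i m, closure (classOf (seqRel X β) (z i m)) = closure (K i m) := fun i m => by
    rw [hclosure (i, m), hKz, classOf_seqRel_of_isSuccLimit X hlim]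
  refine (seqRel_of_isSuccLimit X hlim).2 ⟨β + 1, hlim.add_one_lt hβ, ?_⟩
  rw [seqRel_add_one]
  refine Or.inr ⟨n, L, fun i => ⟨fun m => classOf (seqRel X β) (z i m),
    fun m => ⟨z i m, hzX i m, rfl⟩, ?_⟩, hcpt, hconn, hx, hy⟩
  simpa only [hcl] using hKL i

end SeqRel

section UniverseLift

universe u v

theorem seqRel_lift (X : Set ℂ) (o : Ordinal.{u}) :
    seqRel.{max u v} X (lift.{v} o) = seqRel X o := by
  induction o using limitRecOn with
  | zero => rw [lift_zero, seqRel_zero, seqRel_zero]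
  | add_one o ih => rw [lift_add, lift_one, seqRel_add_one, seqRel_add_one, ih]
  | limit o ho ih =>
    ext x y
    rw [seqRel_of_isSuccLimit X (isSuccLimit_lift.2 ho), seqRel_of_isSuccLimit X ho]
    constructor
    · rintro ⟨β, hβ, h⟩
      obtain ⟨β, hβo, rfl⟩ := lt_lift_iff.1 hβ
      exact ⟨β, hβo, ih β hβo ▸ h⟩
    · rintro ⟨β, hβ, h⟩
      exact ⟨lift.{v} β, lift_lt.2 hβ, (ih β hβ).symm ▸ h⟩

/-- The two sides of `seqRel_stabilizes` elaborate `Ordinal` in independent universes. -/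
theorem seqRel_omega_one_eq (X : Set ℂ) : seqRel.{u} X ω₁ = seqRel.{v} X ω₁ := by
  rw [← seqRel_lift.{u, v}, ← seqRel_lift.{v, u}, lift_omega, lift_omega, lift_one, lift_one]

end UniverseLift

/-- the transfinite sequence `(∼_α)` stabilizes at the first uncountable
ordinal `Ω`. -/
theorem seqRel_stabilizes (X : Set ℂ) (hX : IsCompact X) :
    seqRel X ((Cardinal.aleph 1).ord) = seqRel X ((Cardinal.aleph 1).ord + 1) := by
  simp only [Cardinal.ord_aleph]
  rw [seqRel_omega_one_add_one hX]
  exact seqRel_omega_one_eq X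
end
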